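/- With Φ and Φ̃ as above, if additionally each c_i = p_i ≥ 0 with ∑ p_i = 1, then for every n-qubit state ρ: Tr_anc[((X − iY) ⊗ 1) · Φ̃(|+⟩⟨+| ⊗ ρ)] = Φ(ρ), where X, Y are Pauli operators on the ancilla qubit and |+⟩ = (|0⟩+|1⟩)/√2. -/

import Mathlib

open Matrix
open scoped Kronecker ComplexOrder

variable {d : ℕ}

/-- The controlled unitary `W = |0⟩⟨0| ⊗ U + |1⟩⟨1| ⊗ V`. -/
def ctrlW (U V : Matrix (Fin d) (Fin d) ℂ) : Matrix (Fin 2 × Fin d) (Fin 2 × Fin d) ℂ :=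
  fun p q => if p.1 = q.1 then (if p.1 = 0 then U p.2 q.2 else V p.2 q.2) else 0

def pauliX : Matrix (Fin 2) (Fin 2) ℂ := !![0, 1; 1, 0]

def pauliY : Matrix (Fin 2) (Fin 2) ℂ := !![0, -Complex.I; Complex.I, 0]

noncomputable def plusState : Matrix (Fin 2) (Fin 2) ℂ := (1/2 : ℂ) • !![1, 1; 1, 1]

/-- Partial trace over the ancilla qubit. -/
noncomputable def ptraceAnc (C : Matrix (Fin 2 × Fin d) (Fin 2 × Fin d) ℂ) : Matrix (Fin d) (Fin d) ℂ :=
  fun a b => ∑ j : Fin 2, C (j, a) (j, b)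

/-!
Since `X − iY = 2 |1⟩⟨0|`, the partial trace of `((X − iY) ⊗ 1) C` is twice the `(0,1)` block of `C`.
The controlled unitary `W` acts on the `0`-row block from the left by `U`, and `W†` on the `1`-column
block from the right by `V†`, so the `(0,1)` block of `W (|+⟩⟨+| ⊗ ρ) W†` is `U (ρ / 2) V†`.
The identity then extends to the mixture by linearity.
-/

theorem ctrlW_mul_submatrix_zero (U V : Matrix (Fin d) (Fin d) ℂ) {n : Type*} (g : n → Fin 2 × Fin d)
    (A : Matrix (Fin 2 × Fin d) (Fin 2 × Fin d) ℂ) :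
    (ctrlW U V * A).submatrix (Prod.mk 0) g = U * A.submatrix (Prod.mk 0) g := by
  ext a b
  simp [mul_apply, ctrlW, Fintype.sum_prod_type]

theorem mul_conjTranspose_ctrlW_submatrix_one (U V : Matrix (Fin d) (Fin d) ℂ) {n : Type*}
    (f : n → Fin 2 × Fin d) (A : Matrix (Fin 2 × Fin d) (Fin 2 × Fin d) ℂ) :
    (A * (ctrlW U V)ᴴ).submatrix f (Prod.mk 1) = A.submatrix f (Prod.mk 1) * Vᴴ := by
  ext a b
  simp [mul_apply, ctrlW, conjTranspose_apply, Fintype.sum_prod_type, Fin.sum_univ_two]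

theorem kronecker_submatrix_prodMk {R k l m n : Type*} [Mul R] (P : Matrix k l R)
    (ρ : Matrix m n R) (i : k) (j : l) :
    (P ⊗ₖ ρ).submatrix (Prod.mk i) (Prod.mk j) = P i j • ρ := by
  ext a b
  rfl

theorem pauliX_sub_I_smul_pauliY : pauliX - Complex.I • pauliY = Matrix.single 1 0 2 := by
  ext i j
  fin_cases i <;> fin_cases j <;> simp [pauliX, pauliY, one_add_one_eq_two]

theorem ptraceAnc_single_kronecker_one_mul (i j : Fin 2) (c : ℂ)
    (C : Matrix (Fin 2 × Fin d) (Fin 2 × Fin d) ℂ) :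
    ptraceAnc ((Matrix.single i j c ⊗ₖ (1 : Matrix (Fin d) (Fin d) ℂ)) * C)
      = c • C.submatrix (Prod.mk j) (Prod.mk i) := by
  ext a b
  fin_cases i <;> fin_cases j <;>
    simp [ptraceAnc, mul_apply, Fintype.sum_prod_type, Matrix.single_apply, one_apply]

theorem ptraceAnc_sum_smul {ι : Type*} (s : Finset ι) (c : ι → ℂ)
    (C : ι → Matrix (Fin 2 × Fin d) (Fin 2 × Fin d) ℂ) :
    ptraceAnc (∑ i ∈ s, c i • C i) = ∑ i ∈ s, c i • ptraceAnc (C i) := by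
  ext a b
  simp only [ptraceAnc, Matrix.sum_apply, Matrix.smul_apply, smul_eq_mul, Finset.mul_sum]
  exact Finset.sum_comm

theorem hadamard_test_term (U V ρ : Matrix (Fin d) (Fin d) ℂ) :
    ptraceAnc (((pauliX - Complex.I • pauliY) ⊗ₖ (1 : Matrix (Fin d) (Fin d) ℂ))
        * (ctrlW U V * (plusState ⊗ₖ ρ) * (ctrlW U V)ᴴ)) = U * ρ * Vᴴ := by
  rw [pauliX_sub_I_smul_pauliY, ptraceAnc_single_kronecker_one_mul,
    mul_conjTranspose_ctrlW_submatrix_one, ctrlW_mul_submatrix_zero, kronecker_submatrix_prodMk]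
  simp [plusState, smul_smul]

theorem generalized_hadamard_test_general {d m : ℕ}
    (p : Fin m → ℝ)
    (U V : Fin m → Matrix (Fin d) (Fin d) ℂ)
    (ρ : Matrix (Fin d) (Fin d) ℂ) :
    ptraceAnc (((pauliX - Complex.I • pauliY) ⊗ₖ (1 : Matrix (Fin d) (Fin d) ℂ))
        * (∑ i, (p i : ℂ) •
            (ctrlW (U i) (V i) * (plusState ⊗ₖ ρ) * (ctrlW (U i) (V i))ᴴ)))
      = ∑ i, (p i : ℂ) • (U i * ρ * (V i)ᴴ) := by
  simp only [Matrix.mul_sum, mul_smul_comm, ptraceAnc_sum_smul, hadamard_test_term]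

/-- Measuring `X − iY` on the ancilla of the controlled dilation recovers
`Φ(ρ) = ∑ᵢ pᵢ Uᵢ ρ Vᵢ†`: `Tr_anc[((X−iY)⊗1)·Φ̃(|+⟩⟨+|⊗ρ)] = Φ(ρ)`. -/
theorem generalized_hadamard_test {d m : ℕ}
    (p : Fin m → ℝ) (hp : ∀ i, 0 ≤ p i) (hpsum : ∑ i, p i = 1)
    (U V : Fin m → Matrix (Fin d) (Fin d) ℂ)
    (hU : ∀ i, (U i)ᴴ * U i = 1 ∧ U i * (U i)ᴴ = 1)
    (hV : ∀ i, (V i)ᴴ * V i = 1 ∧ V i * (V i)ᴴ = 1)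
    (ρ : Matrix (Fin d) (Fin d) ℂ) (hρ : ρ.PosSemidef) (hρtr : ρ.trace = 1) :
    ptraceAnc (((pauliX - Complex.I • pauliY) ⊗ₖ (1 : Matrix (Fin d) (Fin d) ℂ))
        * (∑ i, (p i : ℂ) •
            (ctrlW (U i) (V i) * (plusState ⊗ₖ ρ) * (ctrlW (U i) (V i))ᴴ)))
      = ∑ i, (p i : ℂ) • (U i * ρ * (V i)ᴴ) :=
  generalized_hadamard_test_general p U V ρ
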